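/- arXiv:1912.03253 — 2 statements merged into one kernel-verified Lean document; each statement's English description precedes it below -/
import Mathlib

section
/- Let (θ,p) ~ N(0, I₂) on ℝ² and ΔH = (1/2)(Aθ² + 2Bθp + Cp²) with A = sin²(α)(χ⁻² − 1), B = cos(α)sin(α)(χ − χ⁻¹), C = sin²(α)(χ² − 1), α ∈ ℝ, χ > 0. Set μ = E[ΔH]. Then E[(ΔH)³] = 18μ² + 15μ³. -/
/-!
`ΔH` is a quadratic form in two independent standard normals, so its moments are polynomials in
`A, B, C` whose coefficients are products of the Gaussian moments `E[θ ^ 2k] = (2k - 1)‼`: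
`E[ΔH] = (A + C) / 2` and `8 E[ΔH³] = 15A³ + 9A²C + 36AB² + 9AC² + 36B²C + 15C³`.
The parametrization of `A, B, C` by `α, χ` forces `B² - AC = A + C`, which eliminates `B` and
leaves a polynomial in `A + C = 2μ`.
-/

open MeasureTheory Real ProbabilityTheory
open scoped NNReal Nat

lemma integral_pow_mul_exp_neg_half_sq_of_even {n : ℕ} (hn : Even n) :
    ∫ x : ℝ, x ^ n * exp (-(1 / 2) * x ^ 2) = √(2 * π) * (n - 1 : ℕ)‼ := by
  obtain ⟨k, rfl⟩ := hn
  have h_symm : ∫ x : ℝ, x ^ (k + k) * exp (-(1 / 2) * x ^ 2)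
      = 2 * ∫ x in Set.Ioi 0, x ^ (k + k) * exp (-(1 / 2) * x ^ 2) := by
    rw [← integral_comp_abs (f := fun x ↦ x ^ (k + k) * exp (-(1 / 2) * x ^ 2))]
    simp_rw [Even.pow_abs ⟨k, rfl⟩, sq_abs]
  have h_gamma : ∫ x in Set.Ioi 0, x ^ (k + k) * exp (-(1 / 2) * x ^ 2)
      = (1 / 2 : ℝ) ^ (-((k + k : ℕ) + 1 : ℝ) / 2) * (1 / 2) * Gamma (((k + k : ℕ) + 1) / 2) := by
    rw [← integral_rpow_mul_exp_neg_mul_rpow zero_lt_two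
      (by linarith [(k + k).cast_nonneg (α := ℝ)]) one_half_pos]
    refine setIntegral_congr_fun measurableSet_Ioi fun x _ ↦ ?_
    rw [rpow_natCast, rpow_two]
  have h_exp : -((k + k : ℕ) + 1 : ℝ) / 2 = -(k + 1 / 2) := by push_cast; ring
  have h_arg : ((k + k : ℕ) + 1 : ℝ) / 2 = k + 1 / 2 := by push_cast; ring
  have h_pow : (1 / 2 : ℝ) ^ (-(k + 1 / 2 : ℝ)) = 2 ^ k * √2 := by
    rw [one_div, inv_rpow zero_le_two, ← rpow_neg zero_le_two, neg_neg,
      rpow_add two_pos, rpow_natCast, sqrt_eq_rpow, one_div]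
  rw [h_symm, h_gamma, h_exp, h_arg, h_pow, Gamma_nat_add_half, sqrt_mul zero_le_two,
    show 2 * k - 1 = k + k - 1 by omega]
  field_simp

lemma integrable_pow_gaussianReal (μ : ℝ) (v : ℝ≥0) (n : ℕ) :
    Integrable (fun x : ℝ ↦ x ^ n) (gaussianReal μ v) :=
  integrable_pow_of_mem_interior_integrableExpSet (by simp) n

lemma integral_pow_gaussianReal_of_odd (v : ℝ≥0) {n : ℕ} (hn : Odd n) :
    ∫ x, x ^ n ∂gaussianReal 0 v = 0 := by
  have h_neg : ∫ x, x ^ n ∂gaussianReal 0 v = -∫ x, x ^ n ∂gaussianReal 0 v := by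
    calc ∫ x, x ^ n ∂gaussianReal 0 v
        = ∫ x, x ^ n ∂(gaussianReal 0 v).map (fun x ↦ -x) := by
          rw [gaussianReal_map_neg, neg_zero]
      _ = ∫ x, (-x) ^ n ∂gaussianReal 0 v := integral_map (by fun_prop) (by fun_prop)
      _ = -∫ x, x ^ n ∂gaussianReal 0 v := by simp_rw [hn.neg_pow, integral_neg]
  linarith

lemma integral_pow_gaussianReal_of_even {n : ℕ} (hn : Even n) :
    ∫ x, x ^ n ∂gaussianReal 0 1 = (n - 1 : ℕ)‼ := by
  have h_pdf (x : ℝ) :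
      gaussianPDFReal 0 1 x • x ^ n = (√(2 * π))⁻¹ * (x ^ n * exp (-(1 / 2) * x ^ 2)) := by
    simp only [gaussianPDFReal, smul_eq_mul]
    push_cast
    ring_nf
  rw [integral_gaussianReal_eq_integral_smul one_ne_zero]
  simp_rw [h_pdf]
  rw [integral_const_mul, integral_pow_mul_exp_neg_half_sq_of_even hn]
  field_simp

lemma integral_pow_gaussianReal (n : ℕ) :
    ∫ x, x ^ n ∂gaussianReal 0 1 = if Even n then ((n - 1 : ℕ)‼ : ℝ) else 0 := by
  split_ifs with hn
  · exact integral_pow_gaussianReal_of_even hn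
  · exact integral_pow_gaussianReal_of_odd 1 (Nat.not_even_iff_odd.mp hn)

local notation "γ₂" => Measure.prod (gaussianReal 0 1) (gaussianReal 0 1)

lemma integral_finsetSum_monomial_gaussianReal_prod {ι : Type*} (s : Finset ι) (c : ι → ℝ)
    (a b : ι → ℕ) :
    ∫ v : ℝ × ℝ, ∑ i ∈ s, c i * (v.1 ^ a i * v.2 ^ b i) ∂γ₂
      = ∑ i ∈ s, c i * ((∫ x, x ^ a i ∂gaussianReal 0 1) * ∫ x, x ^ b i ∂gaussianReal 0 1) := by
  rw [integral_finsetSum _ fun i _ ↦ ((integrable_pow_gaussianReal 0 1 (a i)).mul_prod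
    (integrable_pow_gaussianReal 0 1 (b i))).const_mul _]
  refine Finset.sum_congr rfl fun i _ ↦ ?_
  rw [integral_const_mul, integral_prod_mul (fun x ↦ x ^ a i) (fun x ↦ x ^ b i)]

lemma integral_quadratic_gaussianReal_prod (A B C : ℝ) :
    ∫ v : ℝ × ℝ, (1 / 2) * (A * v.1 ^ 2 + 2 * B * v.1 * v.2 + C * v.2 ^ 2) ∂γ₂ = (A + C) / 2 := by
  have h_expand (v : ℝ × ℝ) : (1 / 2) * (A * v.1 ^ 2 + 2 * B * v.1 * v.2 + C * v.2 ^ 2)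
      = ∑ i : Fin 3, ![A / 2, B, C / 2] i * (v.1 ^ (2 - i : ℕ) * v.2 ^ (i : ℕ)) := by
    simp [Fin.sum_univ_succ]
    ring
  simp_rw [h_expand, integral_finsetSum_monomial_gaussianReal_prod, integral_pow_gaussianReal]
  simp [Fin.sum_univ_succ]
  ring

lemma integral_quadratic_pow_three_gaussianReal_prod (A B C : ℝ) :
    ∫ v : ℝ × ℝ, ((1 / 2) * (A * v.1 ^ 2 + 2 * B * v.1 * v.2 + C * v.2 ^ 2)) ^ 3 ∂γ₂
      = (15 * A ^ 3 + 9 * A ^ 2 * C + 36 * A * B ^ 2 + 9 * A * C ^ 2 + 36 * B ^ 2 * C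
          + 15 * C ^ 3) / 8 := by
  have h_expand (v : ℝ × ℝ) : ((1 / 2) * (A * v.1 ^ 2 + 2 * B * v.1 * v.2 + C * v.2 ^ 2)) ^ 3
      = ∑ i : Fin 7, ![A ^ 3, 6 * A ^ 2 * B, 3 * A ^ 2 * C + 12 * A * B ^ 2,
          12 * A * B * C + 8 * B ^ 3, 3 * A * C ^ 2 + 12 * B ^ 2 * C, 6 * B * C ^ 2, C ^ 3] i / 8
          * (v.1 ^ (6 - i : ℕ) * v.2 ^ (i : ℕ)) := by
    simp [Fin.sum_univ_succ]
    ring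
  simp_rw [h_expand, integral_finsetSum_monomial_gaussianReal_prod, integral_pow_gaussianReal]
  simp [Fin.sum_univ_succ, Nat.even_iff]
  ring

lemma sq_sub_mul_eq_add_of_energyError_coeffs {α χ A B C : ℝ} (hχ : χ ≠ 0)
    (hA : A = sin α ^ 2 * (χ⁻¹ ^ 2 - 1)) (hB : B = cos α * sin α * (χ - χ⁻¹))
    (hC : C = sin α ^ 2 * (χ ^ 2 - 1)) :
    B ^ 2 - A * C = A + C := by
  subst hA hB hC
  linear_combination (sin α ^ 2 * (χ - χ⁻¹) ^ 2) * sin_sq_add_cos_sq α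
    - (sin α ^ 4 * (χ⁻¹ * χ - 1) + 2 * sin α ^ 2) * inv_mul_cancel₀ hχ

/-- Moment of the energy error for the standard univariate Gaussian target:
a universal polynomial in the mean energy error μ. -/
theorem energy_error_moment_3
    (α χ : ℝ) (hχ : 0 < χ)
    (A B C : ℝ)
    (hA : A = Real.sin α ^ 2 * (χ⁻¹ ^ 2 - 1))
    (hB : B = Real.cos α * Real.sin α * (χ - χ⁻¹))
    (hC : C = Real.sin α ^ 2 * (χ ^ 2 - 1))
    (ΔH : ℝ × ℝ → ℝ)
    (hΔH : ΔH = fun v =>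
      (1 / 2) * (A * v.1 ^ 2 + 2 * B * v.1 * v.2 + C * v.2 ^ 2))
    (μ : ℝ)
    (hμ : μ = ∫ v, ΔH v ∂((gaussianReal 0 1).prod (gaussianReal 0 1))) :
    (∫ v, (ΔH v) ^ 3 ∂((gaussianReal 0 1).prod (gaussianReal 0 1))) = 18 * μ ^ 2 + 15 * μ ^ 3 := by
  have h_coeffs := sq_sub_mul_eq_add_of_energyError_coeffs hχ.ne' hA hB hC
  subst hΔH
  rw [integral_quadratic_gaussianReal_prod] at hμ
  rw [integral_quadratic_pow_three_gaussianReal_prod, hμ]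
  linear_combination (9 / 2 * (A + C)) * h_coeffs
end

section
/- Under the assumptions of the previous CLT (ΔH_d ⇒ N(μ, 2μ)), the expected acceptance rates satisfy E[min(1, exp(−ΔH_d))] → 2Φ(−√(μ/2)) as d → ∞. -/
open MeasureTheory Real ProbabilityTheory Filter

/-- The standard normal cumulative distribution function. -/
noncomputable def stdNormalCDF (x : ℝ) : ℝ :=
  ∫ t in Set.Iic x, ProbabilityTheory.gaussianPDFReal 0 1 t

/-!
The acceptance probability `u ↦ min 1 (exp (-u))` is bounded and continuous, so the
hypothesis applies to it directly. For `ζ ~ N(μ, 2μ)` with `μ > 0` the density `p` satisfies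
`p (-x) = exp (-x) * p x`, hence
`E[min(1, e^{-ζ})] = ∫_{x ≤ 0} p + ∫_{x > 0} p (-x) = 2 P(ζ ≤ 0) = 2 Φ(-μ / √(2μ)) = 2 Φ(-√(μ/2))`.
-/

open Set
open scoped NNReal BoundedContinuousFunction

lemma gaussianReal_real_eq_setIntegral (m : ℝ) {v : ℝ≥0} (hv : v ≠ 0) (s : Set ℝ) :
    (gaussianReal m v).real s = ∫ x in s, gaussianPDFReal m v x := by
  rw [measureReal_def, gaussianReal_apply_eq_integral m hv,
    ENNReal.toReal_ofReal (setIntegral_nonneg_of_ae (ae_of_all _ (gaussianPDFReal_nonneg m v)))]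

lemma stdNormalCDF_eq_real_Iic (x : ℝ) : stdNormalCDF x = (gaussianReal 0 1).real (Iic x) :=
  (gaussianReal_real_eq_setIntegral 0 one_ne_zero _).symm

lemma stdNormalCDF_neg (x : ℝ) : stdNormalCDF (-x) = 1 - stdNormalCDF x := by
  have := nullSingletonClass_gaussianReal (μ := 0) one_ne_zero
  calc stdNormalCDF (-x) = ((gaussianReal 0 1).map (fun t ↦ -t)).real (Iic (-x)) := by
        rw [gaussianReal_map_neg, neg_zero, stdNormalCDF_eq_real_Iic]
    _ = (gaussianReal 0 1).real (Ioi x)ᶜᶜ := by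
        rw [map_measureReal_apply measurable_neg measurableSet_Iic, compl_compl,
          measureReal_congr Ioi_ae_eq_Ici]
        simp [Set.preimage, Ici]
    _ = 1 - stdNormalCDF x := by
        rw [probReal_compl_eq_one_sub measurableSet_Ioi.compl, compl_Ioi, stdNormalCDF_eq_real_Iic]

lemma stdNormalCDF_zero : stdNormalCDF 0 = 1 / 2 := by
  linarith [neg_zero (G := ℝ) ▸ stdNormalCDF_neg 0]

lemma gaussianReal_real_Iic (m : ℝ) {v : ℝ≥0} (hv : v ≠ 0) (x : ℝ) :
    (gaussianReal m v).real (Iic x) = stdNormalCDF ((x - m) / √v) := by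
  have hsqrt : 0 < √(v : ℝ) := Real.sqrt_pos.2 (by positivity)
  have hmap : (gaussianReal 0 1).map (fun t ↦ √v * t + m) = gaussianReal m v := by
    change (gaussianReal 0 1).map ((· + m) ∘ (√v * ·)) = _
    rw [← Measure.map_map (measurable_add_const m) (measurable_const_mul _),
      gaussianReal_map_const_mul, gaussianReal_map_add_const]
    congr 1
    · ring
    · ext; simp
  have hpre : (fun t ↦ √v * t + m) ⁻¹' Iic x = Iic ((x - m) / √v) := by
    ext t
    simp only [mem_preimage, mem_Iic, le_div_iff₀ hsqrt]
    constructor <;> intro h <;> linarith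
  rw [← hmap, map_measureReal_apply (by fun_prop) measurableSet_Iic, hpre, stdNormalCDF_eq_real_Iic]

lemma gaussianPDFReal_neg_eq_exp_neg_mul {m : ℝ} {v : ℝ≥0} (hv : (v : ℝ) = 2 * m) (x : ℝ) :
    gaussianPDFReal m v (-x) = exp (-x) * gaussianPDFReal m v x := by
  rcases eq_or_ne m 0 with rfl | hm
  · simp [show v = 0 from NNReal.coe_eq_zero.1 (by simpa using hv), gaussianPDFReal_zero_var]
  simp only [gaussianPDFReal, hv]
  rw [mul_left_comm (exp (-x)), ← exp_add]
  congr 2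
  field_simp
  ring

lemma integral_min_one_exp_neg_gaussianReal {m : ℝ} {v : ℝ≥0} (hv : (v : ℝ) = 2 * m)
    (hv0 : v ≠ 0) :
    ∫ x, min 1 (exp (-x)) ∂gaussianReal m v = 2 * (gaussianReal m v).real (Iic 0) := by
  set p := gaussianPDFReal m v
  have hsplit : ∀ x, p x • min 1 (exp (-x)) =
      (Iic 0).indicator p x + (Ioi 0).indicator (fun y ↦ p (-y)) x := by
    intro x
    rcases le_or_gt x 0 with hx | hx
    · simp [hx]
    · simp [hx, min_eq_right (exp_le_one_iff.2 (neg_nonpos.2 hx.le)), p,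
        gaussianPDFReal_neg_eq_exp_neg_mul hv, mul_comm]
  have hp : Integrable p := integrable_gaussianPDFReal m v
  rw [integral_gaussianReal_eq_integral_smul hv0, integral_congr_ae (ae_of_all _ hsplit),
    integral_add (hp.indicator measurableSet_Iic) (hp.comp_neg.indicator measurableSet_Ioi),
    integral_indicator measurableSet_Iic, integral_indicator measurableSet_Ioi,
    integral_comp_neg_Ioi, neg_zero, gaussianReal_real_eq_setIntegral m hv0]
  ring

noncomputable def acceptanceProb : ℝ →ᵇ ℝ :=
  .mkOfBound ⟨fun x ↦ min 1 (exp (-x)), by fun_prop⟩ 1 fun x y ↦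
    Real.dist_le_of_mem_Icc_01 ⟨le_min zero_le_one (exp_nonneg _), min_le_left _ _⟩
      ⟨le_min zero_le_one (exp_nonneg _), min_le_left _ _⟩

lemma integral_acceptanceProb_gaussianReal (μ : ℝ) :
    ∫ x, acceptanceProb x ∂gaussianReal μ (2 * μ).toNNReal = 2 * stdNormalCDF (-√(μ / 2)) := by
  change ∫ x, min 1 (exp (-x)) ∂_ = _
  rcases le_or_gt μ 0 with hμ | hμ
  · -- the variance `(2 * μ).toNNReal` truncates to `0`, so the law is the Dirac mass at `μ`
    rw [Real.toNNReal_of_nonpos (by linarith), gaussianReal_zero_var, integral_dirac,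
      min_eq_left (one_le_exp (neg_nonneg.2 hμ)), sqrt_eq_zero_of_nonpos (by linarith), neg_zero,
      stdNormalCDF_zero]
    norm_num
  have hv : ((2 * μ).toNNReal : ℝ) = 2 * μ := Real.coe_toNNReal _ (by linarith)
  have hv0 : (2 * μ).toNNReal ≠ 0 := by positivity
  have hquantile : (0 - μ) / √(2 * μ) = -√(μ / 2) := by
    rw [zero_sub, neg_div, neg_inj, div_eq_iff (sqrt_pos.2 (by linarith)).ne',
      ← sqrt_mul (by linarith), show μ / 2 * (2 * μ) = μ ^ 2 by ring, sqrt_sq hμ.le]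
  rw [integral_min_one_exp_neg_gaussianReal hv hv0, gaussianReal_real_Iic μ hv0, hv, hquantile]

theorem expected_acceptance_tendsto_of_clt_general
    {Ω : Type*} [MeasurableSpace Ω] (P : Measure Ω)
    (ΔH : ℕ → Ω → ℝ)
    (μ : ℝ)
    (hclt : ∀ f : BoundedContinuousFunction ℝ ℝ,
      Tendsto (fun d => ∫ ω, f (ΔH d ω) ∂P) atTop
        (nhds (∫ x, f x ∂(gaussianReal μ (2 * μ).toNNReal)))) :
    Tendsto (fun d => ∫ ω, min 1 (Real.exp (-(ΔH d ω))) ∂P) atTop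
      (nhds (2 * stdNormalCDF (-Real.sqrt (μ / 2)))) :=
  integral_acceptanceProb_gaussianReal μ ▸ hclt acceptanceProb

/-- If the energy errors `ΔH_d` converge in distribution to `N(μ, 2μ)`, then
the expected acceptance rates converge to `2Φ(−√(μ/2))`. -/
theorem expected_acceptance_tendsto_of_clt
    {Ω : Type*} [MeasurableSpace Ω] (P : Measure Ω) [IsProbabilityMeasure P]
    (ΔH : ℕ → Ω → ℝ)
    (hmeas : ∀ d, Measurable (ΔH d))
    (μ : ℝ) (hμ : 0 ≤ μ)
    (hclt : ∀ f : BoundedContinuousFunction ℝ ℝ,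
      Tendsto (fun d => ∫ ω, f (ΔH d ω) ∂P) atTop
        (nhds (∫ x, f x ∂(gaussianReal μ (2 * μ).toNNReal)))) :
    Tendsto (fun d => ∫ ω, min 1 (Real.exp (-(ΔH d ω))) ∂P) atTop
      (nhds (2 * stdNormalCDF (-Real.sqrt (μ / 2)))) :=
  expected_acceptance_tendsto_of_clt_general P ΔH μ hclt
end
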